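/- arXiv:2503.16388 — 3 statements merged into one kernel-verified Lean document; each statement's English description precedes it below -/
import Mathlib

section
/- Let W be the N×N matrix whose j-th row acts on f = (f_1,...,f_N)ᵀ by: [Wf]_1 = -(h/4)(f_1+f_2); [Wf]_j = -(h/4)((j-1)(f_{j-1}+f_j) + j(f_j+f_{j+1})) for 2 ≤ j ≤ N-1; [Wf]_N = -(h/4)((N-1)(f_{N-1}+f_N) + 2N f_N); where h = ℓ/N for some ℓ > 0. Then ‖Wf‖² ≤ ℓ² ‖f‖² for all f ∈ ℝ^N (Euclidean norm). -/
/-!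
Write `W = -(h/4) A`. The coefficient matrix `A` is nonnegative, symmetric and tridiagonal, with
row sums `4j - 2` (and `4N - 2` in the last row), all at most `4N`. Cauchy–Schwarz on each row
followed by exchanging the order of summation (the Schur test) gives `‖A f‖² ≤ (4N)² ‖f‖²`,
hence `‖W f‖ ≤ (h/4) · 4N · ‖f‖ = ℓ ‖f‖`.
-/

open Finset

theorem sum_sq_sum_mul_le_of_sum_le {ι κ : Type*} (s : Finset ι) (t : Finset κ) (A : ι → κ → ℝ)
    (x : κ → ℝ) {R C : ℝ} (hA : ∀ i ∈ s, ∀ j ∈ t, 0 ≤ A i j) (hR : 0 ≤ R)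
    (hrow : ∀ i ∈ s, ∑ j ∈ t, A i j ≤ R) (hcol : ∀ j ∈ t, ∑ i ∈ s, A i j ≤ C) :
    ∑ i ∈ s, (∑ j ∈ t, A i j * x j) ^ 2 ≤ R * C * ∑ j ∈ t, x j ^ 2 := by
  have hAx : ∀ i ∈ s, 0 ≤ ∑ j ∈ t, A i j * x j ^ 2 := fun i hi =>
    sum_nonneg fun j hj => mul_nonneg (hA i hi j hj) (sq_nonneg _)
  calc ∑ i ∈ s, (∑ j ∈ t, A i j * x j) ^ 2
      ≤ ∑ i ∈ s, (∑ j ∈ t, A i j) * ∑ j ∈ t, A i j * x j ^ 2 :=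
        sum_le_sum fun i hi => sum_sq_le_sum_mul_sum_of_sq_le_mul t (hA i hi)
          (fun j hj => mul_nonneg (hA i hi j hj) (sq_nonneg _)) fun j _ => le_of_eq (by ring)
    _ ≤ ∑ i ∈ s, R * ∑ j ∈ t, A i j * x j ^ 2 :=
        sum_le_sum fun i hi => mul_le_mul_of_nonneg_right (hrow i hi) (hAx i hi)
    _ = R * ∑ j ∈ t, (∑ i ∈ s, A i j) * x j ^ 2 := by
        rw [← mul_sum, sum_comm]; simp_rw [sum_mul]
    _ ≤ R * ∑ j ∈ t, C * x j ^ 2 := by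
        gcongr with j hj; exact hcol j hj
    _ = R * C * ∑ j ∈ t, x j ^ 2 := by rw [← mul_sum, mul_assoc]

/-- The matrix `W` of the statement is `-(h/4) • multiplierCoeff N` on the indices `1, …, N`. -/
def multiplierCoeff (N j k : ℕ) : ℝ :=
  (if k = j - 1 then (j : ℝ) - 1 else 0) +
  (if k = j then (if j = N then 3 * (N : ℝ) - 1 else 2 * (j : ℝ) - 1) else 0) +
  (if k = j + 1 then (j : ℝ) else 0)

theorem multiplierCoeff_nonneg {N j k : ℕ} (hj : 1 ≤ j) : 0 ≤ multiplierCoeff N j k := by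
  have : (1 : ℝ) ≤ j := by exact_mod_cast hj
  unfold multiplierCoeff
  split_ifs <;> subst_vars <;> linarith

theorem multiplierCoeff_comm {N j k : ℕ} (hj : 1 ≤ j) (hk : 1 ≤ k) :
    multiplierCoeff N j k = multiplierCoeff N k j := by
  obtain ⟨j, rfl⟩ := Nat.exists_eq_add_of_le' hj
  obtain ⟨k, rfl⟩ := Nat.exists_eq_add_of_le' hk
  simp only [multiplierCoeff, Nat.add_sub_cancel]
  split_ifs <;> first
    | rfl
    | omega
    | (have := congrArg (Nat.cast (R := ℝ)) ‹_ = _›; push_cast at this ⊢; linarith)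

theorem sum_multiplierCoeff_mul {N j : ℕ} (hj : j ∈ Icc 1 N) (x : ℕ → ℝ) :
    ∑ k ∈ Icc 1 N, multiplierCoeff N j k * x k =
      ((j : ℝ) - 1) * x (j - 1) + (if j = N then 3 * (N : ℝ) - 1 else 2 * (j : ℝ) - 1) * x j +
        if j < N then (j : ℝ) * x (j + 1) else 0 := by
  rw [mem_Icc] at hj
  simp only [multiplierCoeff, add_mul, ite_mul, zero_mul, sum_add_distrib, sum_ite_eq', mem_Icc]
  rw [if_pos hj, if_congr (show 1 ≤ j + 1 ∧ j + 1 ≤ N ↔ j < N by omega) rfl rfl]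
  congr 2
  rcases eq_or_ne j 1 with rfl | hj1
  · simp
  · rw [if_pos (by omega)]

theorem sum_multiplierCoeff_le {N j : ℕ} (hj : j ∈ Icc 1 N) :
    ∑ k ∈ Icc 1 N, multiplierCoeff N j k ≤ 4 * N := by
  have hsum := sum_multiplierCoeff_mul hj fun _ => 1
  simp only [mul_one] at hsum
  rw [hsum]
  have : (j : ℝ) ≤ N := by exact_mod_cast (mem_Icc.1 hj).2
  split_ifs <;> linarith

theorem sum_multiplierCoeff_left_le {N k : ℕ} (hk : k ∈ Icc 1 N) :
    ∑ j ∈ Icc 1 N, multiplierCoeff N j k ≤ 4 * N := calc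
  ∑ j ∈ Icc 1 N, multiplierCoeff N j k = ∑ j ∈ Icc 1 N, multiplierCoeff N k j :=
    sum_congr rfl fun _ hj => multiplierCoeff_comm (mem_Icc.1 hj).1 (mem_Icc.1 hk).1
  _ ≤ 4 * N := sum_multiplierCoeff_le hk

theorem eq_neg_mul_sum_multiplierCoeff_mul {N : ℕ} {h : ℝ} {f Wf : ℕ → ℝ}
    (hWf1 : Wf 1 = -(h/4) * (f 1 + f 2))
    (hWfj : ∀ j, 2 ≤ j → j ≤ N - 1 →
      Wf j = -(h/4) * (((j : ℝ) - 1) * (f (j-1) + f j) + (j : ℝ) * (f j + f (j+1))))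
    (hWfN : Wf N = -(h/4) * (((N : ℝ) - 1) * (f (N-1) + f N) + 2 * (N : ℝ) * f N))
    {j : ℕ} (hj : j ∈ Icc 1 N) :
    Wf j = -(h/4) * ∑ k ∈ Icc 1 N, multiplierCoeff N j k * f k := by
  rw [sum_multiplierCoeff_mul hj]
  obtain ⟨hj1, hjN⟩ := mem_Icc.1 hj
  rcases eq_or_ne j N with rfl | hjN'
  · rw [hWfN]; simp only [if_true, lt_irrefl, if_false]; ring
  rcases eq_or_ne j 1 with rfl | hj1'
  · rw [hWf1, if_neg hjN', if_pos (by omega)]; push_cast; ring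
  · rw [hWfj j (by omega) (by omega), if_neg hjN', if_pos (by omega)]; ring

theorem stmt10_general (N : ℕ) (ℓ : ℝ) (h : ℝ) (hh : h = ℓ / N)
    (f Wf : ℕ → ℝ)
    (hWf1 : Wf 1 = -(h/4) * (f 1 + f 2))
    (hWfj : ∀ j, 2 ≤ j → j ≤ N - 1 →
      Wf j = -(h/4) * (((j : ℝ) - 1) * (f (j-1) + f j) + (j : ℝ) * (f j + f (j+1))))
    (hWfN : Wf N = -(h/4) * (((N : ℝ) - 1) * (f (N-1) + f N) + 2 * (N : ℝ) * f N)) :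
    ∑ j ∈ Finset.Icc 1 N, (Wf j)^2 ≤ ℓ^2 * ∑ j ∈ Finset.Icc 1 N, (f j)^2 := by
  have hA := sum_sq_sum_mul_le_of_sum_le (Icc 1 N) (Icc 1 N) (multiplierCoeff N) f
    (fun j hj _ _ => multiplierCoeff_nonneg (mem_Icc.1 hj).1) (by positivity)
    (fun _ => sum_multiplierCoeff_le) (fun _ => sum_multiplierCoeff_left_le)
  have hhN : (h * N) ^ 2 ≤ ℓ ^ 2 := by
    rcases eq_or_ne (N : ℝ) 0 with hN0 | hN0
    · simp [hN0, sq_nonneg]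
    · rw [hh, div_mul_cancel₀ ℓ hN0]
  calc ∑ j ∈ Icc 1 N, (Wf j)^2
      = (h / 4) ^ 2 * ∑ j ∈ Icc 1 N, (∑ k ∈ Icc 1 N, multiplierCoeff N j k * f k) ^ 2 := by
        rw [mul_sum]
        exact sum_congr rfl fun _ hj => by
          rw [eq_neg_mul_sum_multiplierCoeff_mul hWf1 hWfj hWfN hj]; ring
    _ ≤ (h / 4) ^ 2 * (4 * N * (4 * N) * ∑ j ∈ Icc 1 N, f j ^ 2) :=
        mul_le_mul_of_nonneg_left hA (by positivity)
    _ = (h * N) ^ 2 * ∑ j ∈ Icc 1 N, f j ^ 2 := by ring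
    _ ≤ ℓ ^ 2 * ∑ j ∈ Icc 1 N, f j ^ 2 := by gcongr

/-- ‖W f‖² ≤ ℓ² ‖f‖² for the multiplier matrix W. -/
theorem stmt10 (N : ℕ) (hN : 2 ≤ N) (ℓ : ℝ) (hℓ : 0 < ℓ) (h : ℝ) (hh : h = ℓ / N)
    (f Wf : ℕ → ℝ)
    (hWf1 : Wf 1 = -(h/4) * (f 1 + f 2))
    (hWfj : ∀ j, 2 ≤ j → j ≤ N - 1 →
      Wf j = -(h/4) * (((j : ℝ) - 1) * (f (j-1) + f j) + (j : ℝ) * (f j + f (j+1))))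
    (hWfN : Wf N = -(h/4) * (((N : ℝ) - 1) * (f (N-1) + f N) + 2 * (N : ℝ) * f N)) :
    ∑ j ∈ Finset.Icc 1 N, (Wf j)^2 ≤ ℓ^2 * ∑ j ∈ Finset.Icc 1 N, (f j)^2 :=
  stmt10_general N ℓ h hh f Wf hWf1 hWfj hWfN
end

section
/- Let θ_1,...,θ_N > 0 with inverses θ̄_k = 1/θ_k, Q̃ = diag(θ_1,...,θ_N), M = (1/2)(I_N + Lᵀ), C the tridiagonal matrix with [C]_{1,2}=1/2, [C]_{j,j±1} = ±j/2 for 2≤j≤N-1, [C]_{N,N-1}=-N, [C]_{N,N}=N, and O the symmetric tridiagonal matrix with zero diagonal and [O]_{j,j+1} = (j/2)(θ_{j+1}-θ_j). Then for any h>0, ℓ = Nh, and all f ∈ ℝ^N: h⟨M Q̃^{-1} Mᵀ f, C f⟩ ≤ -(h/2) fᵀ M Q̃^{-1}(Q̃ - O) Q̃^{-1} Mᵀ f + (ℓ θ̄_N / 2) fᵀ t_r t_rᵀ f. -/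
/-!
Put `u = Q̃⁻¹ Mᵀ f`, so that `2 θ_k u_k = f_{k-1} + f_k` (with `f_0 = 0`). For `k < N` the `k`-th
row of `C f` is `(k/2)(f_{k+1} - f_{k-1}) = k (θ_{k+1} u_{k+1} - θ_k u_k)`, and then the cross terms
`u_k u_{k+1}` of `2 ⟨M u, C f⟩` cancel those of `uᵀ (Q̃ - O) u`; what remains telescopes to the
boundary identity
`2 ⟨M u, C f⟩ + uᵀ (Q̃ - O) u = (N / θ_N) (f_N² - (f_N - f_{N-1})² / 4)`.
Multiplying by `h / 2` and dropping the square gives the inequality.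
-/

open Matrix Finset

section Tridiagonal

variable {R : Type*} {N : ℕ}

/-- `padSeq f k = f (k - 1)` for `1 ≤ k ≤ N` and `0` otherwise: the paper's 1-based indexing,
with zero boundary values `f_0 = f_{N+1} = 0`. -/
def padSeq [Zero R] (f : Fin N → R) (k : ℕ) : R :=
  if h : k ≠ 0 ∧ k ≤ N then f ⟨k - 1, by omega⟩ else 0

section Zero

variable [Zero R] (f : Fin N → R)

@[simp]
lemma padSeq_zero : padSeq f 0 = 0 := by
  simp [padSeq]

lemma padSeq_of_lt {k : ℕ} (hk : N < k) : padSeq f k = 0 :=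
  dif_neg (by omega)

lemma padSeq_succ {k : ℕ} (hk : k < N) : padSeq f (k + 1) = f ⟨k, hk⟩ :=
  dif_pos (by omega)

@[simp]
lemma padSeq_val_succ (i : Fin N) : padSeq f (i + 1) = f i :=
  padSeq_succ f i.isLt

end Zero

variable [CommSemiring R]

lemma sum_ite_val_succ_eq_padSeq (f : Fin N → R) (k : ℕ) :
    ∑ j : Fin N, (if (j : ℕ) + 1 = k then f j else 0) = padSeq f k := by
  rcases k with _ | k
  · simp
  by_cases hk : k < N
  · rw [padSeq_succ f hk, Finset.sum_eq_single ⟨k, hk⟩ (fun j _ hj => if_neg ?_) (by simp)]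
    · simp
    · simpa [Fin.ext_iff] using hj
  · rw [padSeq_of_lt f (by omega)]
    exact Finset.sum_eq_zero fun j _ => if_neg (by omega)

lemma dotProduct_eq_sum_padSeq (x y : Fin N → R) :
    x ⬝ᵥ y = ∑ k ∈ range N, padSeq x (k + 1) * padSeq y (k + 1) := by
  rw [dotProduct, ← Fin.sum_univ_eq_sum_range (fun k => padSeq x (k + 1) * padSeq y (k + 1))]
  simp

lemma padSeq_diagonal_mulVec (d : ℕ → R) (v : Fin N → R) (k : ℕ) :
    padSeq (diagonal (fun i : Fin N => d (i + 1)) *ᵥ v) k = d k * padSeq v k := by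
  unfold padSeq
  split_ifs with hk
  · rw [mulVec_diagonal]
    congr 2
    simp only
    omega
  · rw [mul_zero]

def tridiag (p q r : ℕ → R) : Matrix (Fin N) (Fin N) R :=
  of fun i j =>
    if (j : ℕ) = i + 1 then p i else if (i : ℕ) = j + 1 then q i else if i = j then r i else 0

/-- Row `k` (0-based) of `tridiag p q r` applied to a vector whose `padSeq` is `W` (1-based). -/
def tridiagSeq (p q r W : ℕ → R) (k : ℕ) : R :=
  p k * W (k + 2) + q k * W k + r k * W (k + 1)

lemma padSeq_tridiag_mulVec (p q r : ℕ → R) (v : Fin N → R) {k : ℕ} (hk : k < N) :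
    padSeq (tridiag p q r *ᵥ v) (k + 1) = tridiagSeq p q r (padSeq v) k := by
  rw [padSeq_succ _ hk, tridiagSeq, ← sum_ite_val_succ_eq_padSeq v, ← sum_ite_val_succ_eq_padSeq v,
    ← sum_ite_val_succ_eq_padSeq v, mul_sum, mul_sum, mul_sum, ← sum_add_distrib, ← sum_add_distrib,
    mulVec, dotProduct]
  refine Finset.sum_congr rfl fun j _ => ?_
  simp only [tridiag, of_apply, Fin.ext_iff]
  split_ifs <;> first | omega | ring

lemma dotProduct_tridiag_mulVec (p q r : ℕ → R) (x v : Fin N → R) :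
    x ⬝ᵥ (tridiag p q r *ᵥ v) =
      ∑ k ∈ range N, padSeq x (k + 1) * tridiagSeq p q r (padSeq v) k := by
  rw [dotProduct_eq_sum_padSeq]
  exact Finset.sum_congr rfl fun k hk => by rw [padSeq_tridiag_mulVec _ _ _ _ (mem_range.1 hk)]

lemma tridiag_mulVec_dotProduct_tridiag_mulVec (p q r p' q' r' : ℕ → R) (v w : Fin N → R) :
    (tridiag p q r *ᵥ v) ⬝ᵥ (tridiag p' q' r' *ᵥ w) =
      ∑ k ∈ range N, tridiagSeq p q r (padSeq v) k * tridiagSeq p' q' r' (padSeq w) k := by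
  rw [dotProduct_eq_sum_padSeq]
  refine Finset.sum_congr rfl fun k hk => ?_
  rw [padSeq_tridiag_mulVec _ _ _ _ (mem_range.1 hk), padSeq_tridiag_mulVec _ _ _ _ (mem_range.1 hk)]

lemma dotProduct_mul_mul_transpose_mulVec {ι : Type*} [Fintype ι] (B A : Matrix ι ι R) (x : ι → R) :
    x ⬝ᵥ ((B * A * Bᵀ) *ᵥ x) = (Bᵀ *ᵥ x) ⬝ᵥ (A *ᵥ (Bᵀ *ᵥ x)) := by
  rw [← mulVec_mulVec, ← mulVec_mulVec, dotProduct_mulVec, mulVec_transpose]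

lemma dotProduct_vecMulVec_self_mulVec (e f : Fin N → R) :
    f ⬝ᵥ (vecMulVec e e *ᵥ f) = (e ⬝ᵥ f) ^ 2 := by
  rw [vecMulVec_mulVec, op_smul_eq_smul, dotProduct_smul, smul_eq_mul, dotProduct_comm, sq]

lemma indicator_dotProduct_eq_padSeq (f : Fin N → R) (k : ℕ) :
    (fun i : Fin N => if (i : ℕ) + 1 = k then (1 : R) else 0) ⬝ᵥ f = padSeq f k := by
  simp only [dotProduct, ite_mul, one_mul, zero_mul, sum_ite_val_succ_eq_padSeq]

end Tridiagonal

noncomputable section Model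

variable {N : ℕ}

def matM (N : ℕ) : Matrix (Fin N) (Fin N) ℝ :=
  tridiag (fun _ => 1 / 2) 0 (fun _ => 1 / 2)

def matC (N : ℕ) : Matrix (Fin N) (Fin N) ℝ :=
  tridiag (fun k => ((k : ℝ) + 1) / 2) (fun k => if k + 1 = N then -(N : ℝ) else -((k : ℝ) + 1) / 2)
    (fun k => if k + 1 = N then (N : ℝ) else 0)

def matQSubO (θ : ℕ → ℝ) (N : ℕ) : Matrix (Fin N) (Fin N) ℝ :=
  tridiag (fun k => -(((k : ℝ) + 1) / 2 * (θ (k + 2) - θ (k + 1))))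
    (fun k => -((k : ℝ) / 2 * (θ (k + 1) - θ k))) (fun k => θ (k + 1))

lemma eq_matM {L M : Matrix (Fin N) (Fin N) ℝ}
    (hL : ∀ i j, L i j = if (i : ℕ) = (j : ℕ) + 1 then 1 else 0) (hM : M = (1 / 2 : ℝ) • (1 + Lᵀ)) :
    M = matM N := by
  ext i j
  simp only [hM, matM, tridiag, Matrix.smul_apply, Matrix.add_apply, one_apply, transpose_apply, hL,
    of_apply, Pi.zero_apply, Fin.ext_iff, smul_eq_mul]
  split_ifs <;> first | omega | norm_num

lemma matM_transpose :
    (matM N)ᵀ = tridiag 0 (fun _ => 1 / 2) (fun _ => 1 / 2) := by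
  ext i j
  simp only [matM, tridiag, transpose_apply, of_apply, Pi.zero_apply, Fin.ext_iff]
  split_ifs <;> first | omega | rfl

lemma eq_matC {C : Matrix (Fin N) (Fin N) ℝ}
    (hC : ∀ i j : Fin N, C i j =
      if (i : ℕ) + 1 = N then
        (if (j : ℕ) + 2 = N then -(N : ℝ) else if (j : ℕ) + 1 = N then (N : ℝ) else 0)
      else if (j : ℕ) = (i : ℕ) + 1 then (((i : ℕ) + 1 : ℝ)) / 2
      else if (i : ℕ) = (j : ℕ) + 1 then -(((i : ℕ) + 1 : ℝ)) / 2
      else 0) :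
    C = matC N := by
  ext i j
  have := j.isLt
  simp only [hC, matC, tridiag, of_apply, Fin.ext_iff]
  split_ifs <;> first | omega | rfl

lemma sub_eq_matQSubO {θ : ℕ → ℝ} {Q O : Matrix (Fin N) (Fin N) ℝ}
    (hQ : Q = Matrix.diagonal (fun i : Fin N => θ ((i : ℕ) + 1)))
    (hO : ∀ i j : Fin N, O i j =
      if (j : ℕ) = (i : ℕ) + 1 then (((i : ℕ) + 1 : ℝ)) / 2 * (θ ((i : ℕ) + 2) - θ ((i : ℕ) + 1))
      else if (i : ℕ) = (j : ℕ) + 1 then (((j : ℕ) + 1 : ℝ)) / 2 * (θ ((j : ℕ) + 2) - θ ((j : ℕ) + 1))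
      else 0) :
    Q - O = matQSubO θ N := by
  ext i j
  simp only [hQ, hO, matQSubO, tridiag, Matrix.sub_apply, diagonal_apply, of_apply, Fin.ext_iff]
  split_ifs <;> first | omega | simp_all

lemma energy_identity (θ : ℕ → ℝ) (hN : 0 < N) (hθN : θ N ≠ 0) (u f : Fin N → ℝ)
    (hu : ∀ k < N, 2 * θ (k + 1) * padSeq u (k + 1) = padSeq f k + padSeq f (k + 1)) :
    2 * ((matM N *ᵥ u) ⬝ᵥ (matC N *ᵥ f)) + u ⬝ᵥ (matQSubO θ N *ᵥ u) =
      N * (θ N)⁻¹ * (padSeq f N ^ 2 - (padSeq f N - padSeq f (N - 1)) ^ 2 / 4) := by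
  obtain ⟨n, rfl⟩ : ∃ n, N = n + 1 := ⟨N - 1, by omega⟩
  have hUN : padSeq u (n + 2) = 0 := padSeq_of_lt u (by omega)
  have hFN : padSeq f (n + 2) = 0 := padSeq_of_lt f (by omega)
  have hUn := hu n (by omega)
  rw [matM, matC, matQSubO, tridiag_mulVec_dotProduct_tridiag_mulVec, dotProduct_tridiag_mulVec,
    mul_sum, ← sum_add_distrib]
  generalize padSeq u = U at *
  generalize padSeq f = F at *
  set g : ℕ → ℝ := fun k =>
    k * θ (k + 1) * U (k + 1) ^ 2 + k / 2 * (θ (k + 1) - θ k) * U k * U (k + 1)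
  have hU : U (n + 1) = (F n + F (n + 1)) / (2 * θ (n + 1)) := by
    field_simp
    linear_combination hUn
  rw [sum_range_succ, sum_congr rfl (g := fun k => g (k + 1) - g k), sum_range_sub]
  · simp only [tridiagSeq, g, Pi.zero_apply, if_true, hUN, hFN, hU]
    field_simp
    push_cast
    ring
  · intro k hk
    have hk : k < n := mem_range.1 hk
    simp only [tridiagSeq, g, Pi.zero_apply, if_neg (show k + 1 ≠ n + 1 by omega)]
    push_cast
    linear_combination
      -((k : ℝ) + 1) / 2 * (U (k + 1) + U (k + 2)) * (hu (k + 1) (by omega) - hu k (by omega))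

end Model

/-- Lemma (inequality): h⟨M Q̃⁻¹ Mᵀ f, C f⟩
    ≤ -(h/2) fᵀ M Q̃⁻¹ (Q̃-O) Q̃⁻¹ Mᵀ f + (ℓ θ̄_N/2) fᵀ t_r t_rᵀ f. -/
theorem stmt12 (N : ℕ) (hN : 2 ≤ N) (h ℓ : ℝ) (hh : 0 < h) (hℓ : ℓ = N * h)
    (θ : ℕ → ℝ) (hθ : ∀ i, 1 ≤ i → i ≤ N → 0 < θ i)
    (Q Qinv L M C O Tr : Matrix (Fin N) (Fin N) ℝ)
    (hQ : Q = Matrix.diagonal (fun i : Fin N => θ ((i : ℕ) + 1)))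
    (hQinv : Qinv = Matrix.diagonal (fun i : Fin N => (θ ((i : ℕ) + 1))⁻¹))
    (hL : ∀ i j, L i j = if (i : ℕ) = (j : ℕ) + 1 then 1 else 0)
    (hM : M = (1/2 : ℝ) • (1 + Lᵀ))
    (hC : ∀ i j : Fin N, C i j =
      if (i : ℕ) + 1 = N then
        (if (j : ℕ) + 2 = N then -(N : ℝ) else if (j : ℕ) + 1 = N then (N : ℝ) else 0)
      else if (j : ℕ) = (i : ℕ) + 1 then (((i : ℕ) + 1 : ℝ)) / 2
      else if (i : ℕ) = (j : ℕ) + 1 then -(((i : ℕ) + 1 : ℝ)) / 2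
      else 0)
    (hO : ∀ i j : Fin N, O i j =
      if (j : ℕ) = (i : ℕ) + 1 then (((i : ℕ) + 1 : ℝ)) / 2 * (θ ((i : ℕ) + 2) - θ ((i : ℕ) + 1))
      else if (i : ℕ) = (j : ℕ) + 1 then (((j : ℕ) + 1 : ℝ)) / 2 * (θ ((j : ℕ) + 2) - θ ((j : ℕ) + 1))
      else 0)
    (hTr : Tr = Matrix.vecMulVec (fun i : Fin N => if (i : ℕ) + 1 = N then (1:ℝ) else 0)
      (fun i : Fin N => if (i : ℕ) + 1 = N then (1:ℝ) else 0)) :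
    ∀ f : Fin N → ℝ,
      h * (((M * Qinv * Mᵀ) *ᵥ f) ⬝ᵥ (C *ᵥ f)) ≤
        -(h/2) * (f ⬝ᵥ ((M * Qinv * (Q - O) * Qinv * Mᵀ) *ᵥ f))
          + (ℓ * (θ N)⁻¹ / 2) * (f ⬝ᵥ (Tr *ᵥ f)) := by
  intro f
  have hθN : 0 < θ N := hθ N (by omega) le_rfl
  set u := Qinv *ᵥ (Mᵀ *ᵥ f) with hu
  have hU : ∀ k < N, 2 * θ (k + 1) * padSeq u (k + 1) = padSeq f k + padSeq f (k + 1) := by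
    intro k hk
    rw [hu, hQinv, padSeq_diagonal_mulVec (fun k => (θ k)⁻¹), eq_matM hL hM, matM_transpose,
      padSeq_tridiag_mulVec _ _ _ _ hk, tridiagSeq]
    have hθk := (hθ (k + 1) (by omega) (by omega)).ne'
    simp only [Pi.zero_apply]
    field_simp
    ring
  have key := energy_identity θ (by omega) hθN.ne' u f hU
  rw [← eq_matM hL hM, ← eq_matC hC, ← sub_eq_matQSubO hQ hO] at key
  have hX : (M * Qinv * Mᵀ) *ᵥ f = M *ᵥ u := by simp only [hu, mulVec_mulVec, Matrix.mul_assoc]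
  have hY : f ⬝ᵥ ((M * Qinv * (Q - O) * Qinv * Mᵀ) *ᵥ f) = u ⬝ᵥ ((Q - O) *ᵥ u) := by
    have hsymm : Qinvᵀ = Qinv := by rw [hQinv, diagonal_transpose]
    have hB : M * Qinv * (Q - O) * Qinv * Mᵀ = M * Qinv * (Q - O) * (M * Qinv)ᵀ := by
      rw [transpose_mul, hsymm, Matrix.mul_assoc _ Qinv]
    rw [hB, dotProduct_mul_mul_transpose_mulVec, transpose_mul, hsymm, ← mulVec_mulVec]
  rw [hX, hY, hTr, dotProduct_vecMulVec_self_mulVec, indicator_dotProduct_eq_padSeq, hℓ]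
  have hD := mul_nonneg (mul_nonneg hh.le (Nat.cast_nonneg N))
    (mul_nonneg (inv_pos.2 hθN).le (sq_nonneg (padSeq f N - padSeq f (N - 1))))
  linear_combination (h / 2) * key + hD / 8
end

section
/- Let θ_1,...,θ_N > 0 and 0 < c < 1. If for every i ∈ {1,...,N-1} the inequality i²(θ_{i+1}-θ_i)² / ((1-c)² θ_{i+1} θ_i) < 1/cos²(π/(N+1)) holds, then the symmetric tridiagonal matrix T with diagonal entries (1-c)θ_i and off-diagonal entries T_{i,i+1} = T_{i+1,i} = -(i/2)(θ_{i+1}-θ_i) is positive definite. -/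
/-!
Put `yᵢ = √aᵢ |xᵢ|`. The hypothesis bounds each cross term `2 bᵢ xᵢ xᵢ₊₁` of the quadratic form
of the tridiagonal matrix by `yᵢ yᵢ₊₁ / cos (π / (N + 1))`, and for the path graph
`∑ yᵢ yᵢ₊₁ ≤ cos (π / (N + 1)) ∑ yᵢ²`: this is weighted AM-GM, `2 p q ≤ (v / u) p² + (u / v) q²`,
with the weights `sin (k π / (N + 1))` of the Perron eigenvector of the path. Hence the form is
at least `∑ aᵢ xᵢ² - ∑ yᵢ² = 0`. As the hypothesis is strict it still holds after shrinking the
diagonal by a factor `m < 1`, and the remaining diagonal `(1 - m) aᵢ` makes the form definite.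
-/

open Finset Matrix

lemma cos_pi_div_pos {x : ℝ} (hx : 2 < x) : 0 < Real.cos (Real.pi / x) := by
  apply Real.cos_pos_of_mem_Ioo ⟨by linarith [Real.pi_pos, show 0 < Real.pi / x by positivity], ?_⟩
  rw [div_lt_div_iff_of_pos_left Real.pi_pos (by positivity) two_pos]
  exact hx

section WeightedAMGM

variable {K : Type*} [Field K] [LinearOrder K] [IsStrictOrderedRing K]

lemma two_mul_le_div_mul_sq_add_div_mul_sq {u v : K} (hu : 0 < u) (hv : 0 < v) (p q : K) :
    2 * (p * q) ≤ v / u * p ^ 2 + u / v * q ^ 2 := by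
  have key : v / u * p ^ 2 + u / v * q ^ 2 - 2 * (p * q) = (v * p - u * q) ^ 2 / (u * v) := by
    field_simp; ring
  have : 0 ≤ (v * p - u * q) ^ 2 / (u * v) := by positivity
  linarith

theorem two_mul_sum_mul_succ_le_of_weight {n : ℕ} {w : ℕ → K} {lam : K}
    (hw : ∀ k ≤ n, 0 < w (k + 1)) (hw0 : w 0 = 0) (hwn : w (n + 2) = 0)
    (hrec : ∀ k ≤ n, w k + w (k + 2) ≤ lam * w (k + 1)) (y : Fin (n + 1) → K) :
    2 * ∑ i : Fin n, y i.castSucc * y i.succ ≤ lam * ∑ i, y i ^ 2 := by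
  have hpos (i : Fin (n + 1)) : 0 < w (i + 1) := hw i (Nat.lt_succ_iff.mp i.isLt)
  have hamgm (i : Fin n) : 2 * (y i.castSucc * y i.succ) ≤
      w (i.castSucc + 2) / w (i.castSucc + 1) * y i.castSucc ^ 2
        + w i.succ / w (i.succ + 1) * y i.succ ^ 2 := by
    simpa [add_assoc] using
      two_mul_le_div_mul_sq_add_div_mul_sq (hpos i.castSucc) (hpos i.succ) _ _
  have hleft : ∑ i : Fin n, w (i.castSucc + 2) / w (i.castSucc + 1) * y i.castSucc ^ 2
      = ∑ j : Fin (n + 1), w (j + 2) / w (j + 1) * y j ^ 2 := by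
    simp [Fin.sum_univ_castSucc, hwn]
  have hright : ∑ i : Fin n, w i.succ / w (i.succ + 1) * y i.succ ^ 2
      = ∑ j : Fin (n + 1), w j / w (j + 1) * y j ^ 2 := by
    simp [Fin.sum_univ_succ, hw0]
  calc 2 * ∑ i : Fin n, y i.castSucc * y i.succ
      ≤ ∑ j : Fin (n + 1), (w (j + 2) / w (j + 1) + w j / w (j + 1)) * y j ^ 2 := by
        rw [mul_sum]
        grw [sum_le_sum fun i _ => hamgm i]
        simp only [sum_add_distrib, hleft, hright, add_mul, le_refl]
    _ ≤ lam * ∑ i, y i ^ 2 := by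
        rw [mul_sum]
        gcongr with j
        rw [← add_div, div_le_iff₀ (hpos j), add_comm]
        exact hrec j (Nat.lt_succ_iff.mp j.isLt)

end WeightedAMGM

theorem sum_mul_succ_le_cos_mul_sum_sq {n : ℕ} (y : Fin (n + 1) → ℝ) :
    ∑ i : Fin n, y i.castSucc * y i.succ ≤ Real.cos (Real.pi / (n + 2)) * ∑ i, y i ^ 2 := by
  set t := Real.pi / (n + 2)
  have hbound := two_mul_sum_mul_succ_le_of_weight (w := fun k => Real.sin (k * t))
    (lam := 2 * Real.cos t) (n := n) ?_ (by simp) ?_ ?_ y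
  · linarith
  · intro k hk
    apply Real.sin_pos_of_pos_of_lt_pi (by positivity)
    have : ((k + 1 : ℕ) : ℝ) < n + 2 := by push_cast; linarith [(Nat.cast_le (α := ℝ)).2 hk]
    rw [mul_div_assoc', div_lt_iff₀ (by positivity)]
    nlinarith [Real.pi_pos]
  · rw [show ((n + 2 : ℕ) : ℝ) = n + 2 by push_cast; rfl, mul_div_cancel₀ _ (by positivity),
      Real.sin_pi]
  · intro k _
    have hprev : (k : ℝ) * t = (k + 1 : ℕ) * t - t := by push_cast; ring
    have hnext : ((k + 2 : ℕ) : ℝ) * t = (k + 1 : ℕ) * t + t := by push_cast; ring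
    rw [hprev, hnext, Real.sin_sub, Real.sin_add]
    linarith

section Tridiagonal

variable {R : Type*} {N : ℕ}

def superdiagonal [Zero R] (b : ℕ → R) : Matrix (Fin N) (Fin N) R :=
  of fun i j => if (j : ℕ) = i + 1 then b i else 0

def tridiagonal [AddZeroClass R] (a b : ℕ → R) : Matrix (Fin N) (Fin N) R :=
  diagonal (fun i : Fin N => a i) + superdiagonal b + (superdiagonal b)ᵀ

theorem tridiagonal_transpose [AddCommMonoid R] (a b : ℕ → R) :
    (tridiagonal a b : Matrix (Fin N) (Fin N) R)ᵀ = tridiagonal a b := by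
  simp only [tridiagonal, transpose_add, diagonal_transpose, transpose_transpose]
  abel

theorem dotProduct_superdiagonal_mulVec [CommSemiring R] {n : ℕ} (b : ℕ → R)
    (x : Fin (n + 1) → R) :
    x ⬝ᵥ superdiagonal b *ᵥ x = ∑ i : Fin n, b i * (x i.castSucc * x i.succ) := by
  have hrow (i : Fin n) (j : Fin (n + 1)) :
      superdiagonal b i.castSucc j = if j = i.succ then b i else 0 := by
    simp [superdiagonal, Fin.ext_iff]
  have hlast (j : Fin (n + 1)) : superdiagonal b (Fin.last n) j = 0 := by
    simp only [superdiagonal, of_apply, Fin.val_last, ite_eq_right_iff]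
    omega
  rw [dotProduct, Fin.sum_univ_castSucc]
  simp [mulVec, dotProduct, hrow, hlast, mul_left_comm]

theorem dotProduct_tridiagonal_mulVec [CommSemiring R] {n : ℕ} (a b : ℕ → R)
    (x : Fin (n + 1) → R) :
    x ⬝ᵥ tridiagonal a b *ᵥ x =
      ∑ i : Fin (n + 1), a i * x i ^ 2 + 2 * ∑ i : Fin n, b i * (x i.castSucc * x i.succ) := by
  have hdiag : x ⬝ᵥ diagonal (fun i : Fin (n + 1) => a i) *ᵥ x =
      ∑ i : Fin (n + 1), a i * x i ^ 2 :=
    sum_congr rfl fun i _ => by rw [mulVec_diagonal]; ring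
  rw [tridiagonal, add_mulVec, add_mulVec, dotProduct_add, dotProduct_add,
    dotProduct_transpose_mulVec, dotProduct_superdiagonal_mulVec, hdiag, two_mul, add_assoc]

end Tridiagonal

open Filter Topology

section Criterion

variable {n : ℕ} {a b : ℕ → ℝ}

theorem isHermitian_tridiagonal : (tridiagonal a b : Matrix (Fin n) (Fin n) ℝ).IsHermitian := by
  rw [IsHermitian, conjTranspose_eq_transpose_of_trivial, tridiagonal_transpose]

theorem posSemidef_tridiagonal (ha : ∀ i ≤ n, 0 ≤ a i)
    (hb : ∀ i < n, (2 * b i * Real.cos (Real.pi / (n + 2))) ^ 2 ≤ a i * a (i + 1)) :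
    (tridiagonal a b : Matrix (Fin (n + 1)) (Fin (n + 1)) ℝ).PosSemidef := by
  refine .of_dotProduct_mulVec_nonneg isHermitian_tridiagonal fun x => ?_
  rw [star_trivial, dotProduct_tridiagonal_mulVec]
  rcases n.eq_zero_or_pos with rfl | hn
  · simpa using mul_nonneg (ha 0 le_rfl) (sq_nonneg (x 0))
  set β := Real.cos (Real.pi / (n + 2))
  have hβ : 0 < β := cos_pi_div_pos (by linarith [show (1 : ℝ) ≤ n by exact_mod_cast hn])
  have ha' (i : Fin (n + 1)) : 0 ≤ a i := ha i (Nat.lt_succ_iff.mp i.isLt)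
  set y : Fin (n + 1) → ℝ := fun i => √(a i) * |x i|
  have hy_sq (i : Fin (n + 1)) : y i ^ 2 = a i * x i ^ 2 := by
    rw [mul_pow, Real.sq_sqrt (ha' i), sq_abs]
  have hcross (i : Fin n) :
      β * (2 * |b i * (x i.castSucc * x i.succ)|) ≤ y i.castSucc * y i.succ := by
    calc β * (2 * |b i * (x i.castSucc * x i.succ)|)
        = |2 * b i * β| * (|x i.castSucc| * |x i.succ|) := by
          simp only [abs_mul, abs_of_pos hβ, abs_two]; ring
      _ ≤ √(a i * a (i + 1)) * (|x i.castSucc| * |x i.succ|) := by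
          gcongr
          exact Real.abs_le_sqrt (hb i i.isLt)
      _ = y i.castSucc * y i.succ := by
          rw [Real.sqrt_mul (ha i i.isLt.le)]
          simp only [y, Fin.val_castSucc, Fin.val_succ]
          ring
  have hsum : ∑ i : Fin n, 2 * |b i * (x i.castSucc * x i.succ)| ≤
      ∑ i : Fin (n + 1), a i * x i ^ 2 := by
    refine le_of_mul_le_mul_left ?_ hβ
    calc β * ∑ i : Fin n, 2 * |b i * (x i.castSucc * x i.succ)|
        ≤ ∑ i : Fin n, y i.castSucc * y i.succ := by
          rw [mul_sum]; exact sum_le_sum fun i _ => hcross i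
      _ ≤ β * ∑ i, y i ^ 2 := sum_mul_succ_le_cos_mul_sum_sq y
      _ = β * ∑ i : Fin (n + 1), a i * x i ^ 2 := by simp only [hy_sq]
  have habs : -∑ i : Fin n, 2 * |b i * (x i.castSucc * x i.succ)|
      ≤ 2 * ∑ i : Fin n, b i * (x i.castSucc * x i.succ) := by
    rw [mul_sum, ← sum_neg_distrib]
    gcongr with i
    linarith [neg_abs_le (b i * (x i.castSucc * x i.succ))]
  linarith

theorem posDef_tridiagonal (ha : ∀ i ≤ n, 0 < a i)
    (hb : ∀ i < n, (2 * b i * Real.cos (Real.pi / (n + 2))) ^ 2 < a i * a (i + 1)) :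
    (tridiagonal a b : Matrix (Fin (n + 1)) (Fin (n + 1)) ℝ).PosDef := by
  set β := Real.cos (Real.pi / (n + 2))
  have hnear : ∀ᶠ m in 𝓝 (1 : ℝ), ∀ i ∈ range n,
      (2 * b i * β) ^ 2 < (m * a i) * (m * a (i + 1)) :=
    (eventually_all_finset _).2 fun i hi =>
      continuousAt_const.eventually_lt (by fun_prop) (by simpa using hb i (mem_range.1 hi))
  obtain ⟨m, ⟨hm, hm0⟩, hm1⟩ :=
    ((hnear.and (eventually_gt_nhds one_pos)).filter_mono nhdsWithin_le_nhds
      |>.and (self_mem_nhdsWithin (s := Set.Iio 1))).exists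
  have hsplit : (tridiagonal a b : Matrix (Fin (n + 1)) (Fin (n + 1)) ℝ)
      = diagonal (fun i : Fin (n + 1) => (1 - m) * a i) + tridiagonal (fun i => m * a i) b := by
    simp only [tridiagonal, ← add_assoc, diagonal_add, ← add_mul, sub_add_cancel, one_mul]
  rw [hsplit]
  refine .add_posSemidef (.diagonal fun i : Fin (n + 1) => ?_) (posSemidef_tridiagonal
    (fun i hi => (mul_pos hm0 (ha i hi)).le) fun i hi => (hm i (mem_range.2 hi)).le)
  exact mul_pos (sub_pos.2 hm1) (ha i (Nat.lt_succ_iff.mp i.isLt))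

end Criterion

theorem stmt13_general (N : ℕ) (hN : 2 ≤ N) (θ : ℕ → ℝ) (hθ : ∀ i, 1 ≤ i → i ≤ N → 0 < θ i)
    (c : ℝ) (hc1 : c < 1)
    (hD1 : ∀ i, 1 ≤ i → i ≤ N - 1 →
      (i : ℝ)^2 * (θ (i+1) - θ i)^2 / ((1 - c)^2 * θ (i+1) * θ i)
        < 1 / Real.cos (Real.pi / (N + 1)) ^ 2)
    (T : Matrix (Fin N) (Fin N) ℝ)
    (hT : ∀ i j : Fin N, T i j =
      if (i : ℕ) = (j : ℕ) then (1 - c) * θ ((i : ℕ) + 1)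
      else if (j : ℕ) = (i : ℕ) + 1 then
        -(((i : ℕ) + 1 : ℝ)) / 2 * (θ ((i : ℕ) + 2) - θ ((i : ℕ) + 1))
      else if (i : ℕ) = (j : ℕ) + 1 then
        -(((j : ℕ) + 1 : ℝ)) / 2 * (θ ((j : ℕ) + 2) - θ ((j : ℕ) + 1))
      else 0) :
    T.PosDef := by
  obtain ⟨n, rfl⟩ : ∃ n, N = n + 1 := ⟨N - 1, by omega⟩
  have hT' : T = tridiagonal (fun i => (1 - c) * θ (i + 1))
      (fun i => -((i : ℝ) + 1) / 2 * (θ (i + 2) - θ (i + 1))) := by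
    ext i j
    rw [hT]
    simp only [tridiagonal, superdiagonal, Matrix.add_apply, diagonal_apply, transpose_apply,
      of_apply, Fin.ext_iff]
    split_ifs <;> first | omega | simp_all
  rw [hT']
  refine posDef_tridiagonal (fun i hi => mul_pos (sub_pos.2 hc1) (hθ _ (by omega) (by omega)))
    fun i hi => ?_
  have hD := hD1 (i + 1) (by omega) (by omega)
  have hpos : 0 < (1 - c) ^ 2 * θ (i + 1 + 1) * θ (i + 1) :=
    mul_pos (mul_pos (pow_pos (sub_pos.2 hc1) 2) (hθ _ (by omega) (by omega)))
      (hθ _ (by omega) (by omega))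
  have hcos : 0 < Real.cos (Real.pi / ((n + 1 : ℕ) + 1)) ^ 2 :=
    pow_pos (cos_pi_div_pos (by linarith [show (2 : ℝ) ≤ (n + 1 : ℕ) by exact_mod_cast hN])) 2
  rw [div_lt_div_iff₀ hpos hcos, one_mul] at hD
  push_cast at hD
  ring_nf at hD ⊢
  linarith

/-- Condition (D1) implies positive definiteness of T = (1-c)diag(θ) - O. -/
theorem stmt13 (N : ℕ) (hN : 2 ≤ N) (θ : ℕ → ℝ) (hθ : ∀ i, 1 ≤ i → i ≤ N → 0 < θ i)
    (c : ℝ) (hc : 0 < c) (hc1 : c < 1)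
    (hD1 : ∀ i, 1 ≤ i → i ≤ N - 1 →
      (i : ℝ)^2 * (θ (i+1) - θ i)^2 / ((1 - c)^2 * θ (i+1) * θ i)
        < 1 / Real.cos (Real.pi / (N + 1)) ^ 2)
    (T : Matrix (Fin N) (Fin N) ℝ)
    (hT : ∀ i j : Fin N, T i j =
      if (i : ℕ) = (j : ℕ) then (1 - c) * θ ((i : ℕ) + 1)
      else if (j : ℕ) = (i : ℕ) + 1 then
        -(((i : ℕ) + 1 : ℝ)) / 2 * (θ ((i : ℕ) + 2) - θ ((i : ℕ) + 1))
      else if (i : ℕ) = (j : ℕ) + 1 then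
        -(((j : ℕ) + 1 : ℝ)) / 2 * (θ ((j : ℕ) + 2) - θ ((j : ℕ) + 1))
      else 0) :
    T.PosDef :=
  stmt13_general N hN θ hθ c hc1 hD1 T hT
end
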